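/- arXiv:2308.09501 — 9 statements merged into one kernel-verified Lean document; each statement's English description precedes it below -/
import Mathlib

section
/- Let (G, I, R, ι, ub) be an instance of anonymous refugee housing with upper-bounds and let h ∈ I be an intolerant inhabitant, i.e., ub(h) = 0. Let F = {ι(h)} ∪ (N_G(ι(h)) ∩ V_U) be the set consisting of h's vertex together with all empty vertices in its neighbourhood. Then (G, I, R, ι, ub) admits an inhabitants-respecting housing of size R if and only if the instance (G \ F, I \ {h}, R, ι, ub) obtained by deleting the vertices of F from G and removing the inhabitant h (with ι and ub restricted to I \ {h}) admits an inhabitants-respecting housing of size R. -/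
/-!
Since `ub h0 = 0`, an inhabitants-respecting housing leaves every neighbour of `ι h0` empty, so it
avoids `F` and is a housing of the induced subgraph `G'`; conversely a housing of `G'` respects `h0`
because every empty neighbour of `ι h0` lies in `F`. Along the inclusion `G' ↪ G` the neighbourhood
counts of the remaining inhabitants do not change.
-/

open Finset

namespace SimpleGraph

variable {V : Type*} {G : SimpleGraph V} [DecidableRel G.Adj]

theorem card_filter_adj_map_subtype {p : V → Prop} {G' : SimpleGraph (Subtype p)}
    [DecidableRel G'.Adj] (hG' : ∀ u v, G'.Adj u v ↔ G.Adj u.1 v.1) (u : Subtype p)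
    (π' : Finset (Subtype p)) :
    #((π'.map (Function.Embedding.subtype p)).filter (G.Adj u.1)) = #(π'.filter (G'.Adj u)) := by
  rw [filter_map, card_map]
  exact congrArg card (filter_congr fun v _ => (hG' u v).symm)

end SimpleGraph

section IntolerantNeighbourhood

variable {V I : Type*} {G : SimpleGraph V} {ι : I → V} {h0 : I} {F : Finset V}

theorem notMem_of_forall_ne_of_not_adj
    (hF : ∀ v, v ∈ F ↔ v = ι h0 ∨ (G.Adj (ι h0) v ∧ ∀ h, ι h ≠ v))
    {v : V} (hempty : ∀ h, ι h ≠ v) (hadj : ¬G.Adj (ι h0) v) : v ∉ F := by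
  rw [hF]
  rintro (rfl | ⟨hadj', -⟩)
  exacts [hempty h0 rfl, hadj hadj']

theorem not_adj_of_notMem
    (hF : ∀ v, v ∈ F ↔ v = ι h0 ∨ (G.Adj (ι h0) v ∧ ∀ h, ι h ≠ v))
    {v : V} (hv : v ∉ F) (hempty : ∀ h, h ≠ h0 → ι h ≠ v) : ¬G.Adj (ι h0) v := by
  intro hadj
  refine hv ((hF v).2 (Or.inr ⟨hadj, fun h => ?_⟩))
  by_cases hh : h = h0
  · exact hh ▸ G.ne_of_adj hadj
  · exact hempty h hh

end IntolerantNeighbourhood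

theorem remove_intolerant_inhabitant_general
    {V I : Type*}
    (G : SimpleGraph V) [DecidableRel G.Adj]
    (ι : I → V)
    (ub : I → ℕ) (R : ℕ)
    (h0 : I) (hub0 : ub h0 = 0)
    (F : Finset V)
    (hF : ∀ v, v ∈ F ↔ v = ι h0 ∨ (G.Adj (ι h0) v ∧ ∀ h, ι h ≠ v))
    (G' : SimpleGraph {v : V // v ∉ F}) [DecidableRel G'.Adj]
    (hG' : ∀ u v : {v : V // v ∉ F}, G'.Adj u v ↔ G.Adj u.1 v.1)
    (ι' : ∀ h : I, h ≠ h0 → {v : V // v ∉ F})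
    (hι' : ∀ (h : I) (hh : h ≠ h0), (ι' h hh).1 = ι h) :
    (∃ π : Finset V,
        (∀ v ∈ π, ∀ h : I, ι h ≠ v) ∧ π.card = R ∧
        ∀ h : I, (π.filter (fun v => G.Adj (ι h) v)).card ≤ ub h) ↔
    (∃ π' : Finset {v : V // v ∉ F},
        (∀ v ∈ π', ∀ h : I, h ≠ h0 → ι h ≠ v.1) ∧ π'.card = R ∧
        ∀ (h : I) (hh : h ≠ h0),
          (π'.filter (fun v => G'.Adj (ι' h hh) v)).card ≤ ub h) := by
  classical
  constructor
  · rintro ⟨π, hempty, rfl, hub⟩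
    have hnotAdj : ∀ v ∈ π, ¬G.Adj (ι h0) v :=
      card_filter_eq_zero_iff.1 (Nat.le_zero.1 (hub0 ▸ hub h0))
    have hπF : ∀ v ∈ π, v ∉ F := fun v hv =>
      notMem_of_forall_ne_of_not_adj hF (hempty v hv) (hnotAdj v hv)
    refine ⟨π.subtype (· ∉ F), fun v hv h _ => hempty v (mem_subtype.1 hv) h, ?_, fun h hh => ?_⟩
    · rw [← card_map, subtype_map_of_mem hπF]
    · rw [← SimpleGraph.card_filter_adj_map_subtype hG', subtype_map_of_mem hπF, hι']
      exact hub h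
  · rintro ⟨π', hempty', rfl, hub'⟩
    refine ⟨π'.map (Function.Embedding.subtype _), ?_, card_map _, fun h => ?_⟩
    · simp only [mem_map, Function.Embedding.subtype_apply]
      rintro _ ⟨v, hv, rfl⟩ h hvh
      by_cases hh : h = h0
      · exact v.2 ((hF _).2 (Or.inl (hh ▸ hvh).symm))
      · exact hempty' v hv h hh hvh
    by_cases hh : h = h0
    · subst hh
      rw [hub0, Nat.le_zero, card_filter_eq_zero_iff]
      simp only [mem_map, Function.Embedding.subtype_apply]
      rintro _ ⟨v, hv, rfl⟩
      exact not_adj_of_notMem hF v.2 (hempty' v hv)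
    · rw [← hι' h hh, SimpleGraph.card_filter_adj_map_subtype hG']
      exact hub' h hh

/-- Removing an intolerant inhabitant `h0` (one with
`ub h0 = 0`) together with its vertex and all empty vertices in its
neighbourhood (the set `F`) preserves the (non-)existence of an
inhabitants-respecting housing of size `R`.  The reduced instance lives on
the induced subgraph `G'` on the vertices outside `F`, with inhabitant set
`I \ {h0}` and the assignment `ι'` agreeing with `ι`. -/
theorem remove_intolerant_inhabitant
    {V I : Type*} [Fintype V] [DecidableEq V] [Fintype I] [DecidableEq I]
    (G : SimpleGraph V) [DecidableRel G.Adj]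
    (ι : I → V) (hinj : Function.Injective ι)
    (ub : I → ℕ) (R : ℕ)
    (hsize : Fintype.card I + R ≤ Fintype.card V)
    (h0 : I) (hub0 : ub h0 = 0)
    (F : Finset V)
    (hF : ∀ v, v ∈ F ↔ v = ι h0 ∨ (G.Adj (ι h0) v ∧ ∀ h, ι h ≠ v))
    (G' : SimpleGraph {v : V // v ∉ F}) [DecidableRel G'.Adj]
    (hG' : ∀ u v : {v : V // v ∉ F}, G'.Adj u v ↔ G.Adj u.1 v.1)
    (ι' : ∀ h : I, h ≠ h0 → {v : V // v ∉ F})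
    (hι' : ∀ (h : I) (hh : h ≠ h0), (ι' h hh).1 = ι h) :
    (∃ π : Finset V,
        (∀ v ∈ π, ∀ h : I, ι h ≠ v) ∧ π.card = R ∧
        ∀ h : I, (π.filter (fun v => G.Adj (ι h) v)).card ≤ ub h) ↔
    (∃ π' : Finset {v : V // v ∉ F},
        (∀ v ∈ π', ∀ h : I, h ≠ h0 → ι h ≠ v.1) ∧ π'.card = R ∧
        ∀ (h : I) (hh : h ≠ h0),
          (π'.filter (fun v => G'.Adj (ι' h hh) v)).card ≤ ub h) :=
  remove_intolerant_inhabitant_general G ι ub R h0 hub0 F hF G' hG' ι' hι'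
end

section
/- Let ℓ ≥ 2 and let the topology G be the complete bipartite graph with parts A = {a_1, a_2} and B = {b_1, …, b_ℓ} (every a_i adjacent to every b_j and no other edges). Let there be two inhabitants h_1, h_2 with ι(h_i) = a_i for i ∈ {1,2} and ub(h_1) = ub(h_2) = 1, and let the number of refugees R satisfy 2 ≤ R ≤ ℓ. Then there exists no inhabitants-respecting housing of size R in this instance (even though no inhabitant is intolerant). -/
/-! A housing avoids the occupied vertices `a₁, a₂`, so it lies inside `B`, all of which is
adjacent to `a₁`. Hence `a₁` has all `R ≥ 2` refugees as neighbours, exceeding its bound `1`. -/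

theorem SimpleGraph.card_le_of_forall_adj_of_card_filter_adj_le {V : Type*} (G : SimpleGraph V)
    [DecidableRel G.Adj] {v : V} {s : Finset V} {b : ℕ} (hs : ∀ w ∈ s, G.Adj v w)
    (hb : (s.filter fun w => G.Adj v w).card ≤ b) : s.card ≤ b := by
  rwa [Finset.filter_true_of_mem hs] at hb

theorem SimpleGraph.adj_inl_of_ne_inl_of_completeBipartite {α β : Type*} (G : SimpleGraph (α ⊕ β))
    (hadj : ∀ u v, G.Adj u v ↔
      ((∃ a, u = Sum.inl a) ∧ (∃ b, v = Sum.inr b)) ∨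
      ((∃ b, u = Sum.inr b) ∧ (∃ a, v = Sum.inl a)))
    (a : α) {v : α ⊕ β} (hv : ∀ i, v ≠ Sum.inl i) : G.Adj (Sum.inl a) v := by
  rcases v with i | b
  · exact absurd rfl (hv i)
  · exact (hadj _ _).2 (Or.inl ⟨⟨a, rfl⟩, ⟨b, rfl⟩⟩)

theorem complete_bipartite_two_inhabitants_no_housing_general
    (ℓ R : ℕ)
    (G : SimpleGraph (Fin 2 ⊕ Fin ℓ)) [DecidableRel G.Adj]
    (hadj : ∀ u v, G.Adj u v ↔
      ((∃ a, u = Sum.inl a) ∧ (∃ b, v = Sum.inr b)) ∨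
      ((∃ b, u = Sum.inr b) ∧ (∃ a, v = Sum.inl a)))
    (ub : Fin 2 → ℕ) (hub : ∀ i, ub i = 1)
    (hR2 : 2 ≤ R) :
    ¬ ∃ π : Finset (Fin 2 ⊕ Fin ℓ),
        (∀ v ∈ π, ∀ i : Fin 2, v ≠ Sum.inl i) ∧ π.card = R ∧
        ∀ i : Fin 2, (π.filter (fun v => G.Adj (Sum.inl i) v)).card ≤ ub i := by
  rintro ⟨π, hempty, rfl, hresp⟩
  have hπ_adj : ∀ v ∈ π, G.Adj (Sum.inl 0) v := fun v hv =>
    G.adj_inl_of_ne_inl_of_completeBipartite hadj 0 (hempty v hv)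
  have hcard := G.card_le_of_forall_adj_of_card_filter_adj_le hπ_adj (hresp 0)
  rw [hub] at hcard
  omega

/-- If the topology is the complete bipartite graph
`K_{2,ℓ}` with parts `A = Fin 2` and `B = Fin ℓ`, the two inhabitants occupy
the vertices of `A` and both have upper-bound `1`, and `2 ≤ R ≤ ℓ`, then
there is no inhabitants-respecting housing of size `R` (even though no
inhabitant is intolerant). -/
theorem complete_bipartite_two_inhabitants_no_housing
    (ℓ R : ℕ) (hℓ : 2 ≤ ℓ)
    (G : SimpleGraph (Fin 2 ⊕ Fin ℓ)) [DecidableRel G.Adj]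
    (hadj : ∀ u v, G.Adj u v ↔
      ((∃ a, u = Sum.inl a) ∧ (∃ b, v = Sum.inr b)) ∨
      ((∃ b, u = Sum.inr b) ∧ (∃ a, v = Sum.inl a)))
    (ub : Fin 2 → ℕ) (hub : ∀ i, ub i = 1)
    (hR2 : 2 ≤ R) (hRℓ : R ≤ ℓ) :
    ¬ ∃ π : Finset (Fin 2 ⊕ Fin ℓ),
        (∀ v ∈ π, ∀ i : Fin 2, v ≠ Sum.inl i) ∧ π.card = R ∧
        ∀ i : Fin 2, (π.filter (fun v => G.Adj (Sum.inl i) v)).card ≤ ub i :=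
  complete_bipartite_two_inhabitants_no_housing_general ℓ R G hadj ub hub hR2
end

section
/- Let (G, I, R, ι, ub) be an instance of anonymous refugee housing with upper-bounds and let h ∈ I be an inhabitant with ub(h) ≥ R. Then (G, I, R, ι, ub) admits an inhabitants-respecting housing of size R if and only if the instance (G \ {ι(h)}, I \ {h}, R, ι, ub) obtained by deleting the vertex ι(h) from G and removing the inhabitant h (with ι and ub restricted to I \ {h}) admits an inhabitants-respecting housing of size R. -/
/-!
An occupied vertex is never in a housing, so housings of size `R` of the original instance are
exactly the images of housings of size `R` of the reduced one, with the same neighbourhood counts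
at every inhabitant other than `h0`. The only extra constraint in the original instance is the one
at `h0`, and it is vacuous: `h0` has at most `R` refugee neighbours and `R ≤ ub h0`.
-/

open Finset

lemma SimpleGraph.card_filter_adj_map_subtype_s4 {V : Type*} {p : V → Prop}
    (G : SimpleGraph V) [DecidableRel G.Adj] (G' : SimpleGraph (Subtype p)) [DecidableRel G'.Adj]
    (hG' : ∀ u v, G'.Adj u v ↔ G.Adj u v) (s : Finset (Subtype p)) (u : Subtype p) :
    #((s.map (Function.Embedding.subtype p)).filter (G.Adj u)) = #(s.filter (G'.Adj u)) := by
  rw [filter_map, card_map]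
  exact congrArg card (filter_congr fun v _ => (hG' u v).symm)

lemma Finset.exists_map_subtype_eq {V : Type*} {p : V → Prop} {s : Finset V} (hs : ∀ v ∈ s, p v) :
    ∃ t : Finset (Subtype p), t.map (Function.Embedding.subtype p) = s := by
  classical
  exact ⟨s.subtype p, subtype_map_of_mem hs⟩

theorem remove_generous_inhabitant_general
    {V I : Type*}
    (G : SimpleGraph V) [DecidableRel G.Adj]
    (ι : I → V)
    (ub : I → ℕ) (R : ℕ)
    (h0 : I) (hub0 : R ≤ ub h0)
    (G' : SimpleGraph {v : V // v ≠ ι h0}) [DecidableRel G'.Adj]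
    (hG' : ∀ u v : {v : V // v ≠ ι h0}, G'.Adj u v ↔ G.Adj u.1 v.1)
    (ι' : ∀ h : I, h ≠ h0 → {v : V // v ≠ ι h0})
    (hι' : ∀ (h : I) (hh : h ≠ h0), (ι' h hh).1 = ι h) :
    (∃ π : Finset V,
        (∀ v ∈ π, ∀ h : I, ι h ≠ v) ∧ π.card = R ∧
        ∀ h : I, (π.filter (fun v => G.Adj (ι h) v)).card ≤ ub h) ↔
    (∃ π' : Finset {v : V // v ≠ ι h0},
        (∀ v ∈ π', ∀ h : I, h ≠ h0 → ι h ≠ v.1) ∧ π'.card = R ∧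
        ∀ (h : I) (hh : h ≠ h0),
          (π'.filter (fun v => G'.Adj (ι' h hh) v)).card ≤ ub h) := by
  have hcount (π' : Finset {v : V // v ≠ ι h0}) (h : I) (hh : h ≠ h0) :
      #((π'.map (Function.Embedding.subtype _)).filter (G.Adj (ι h))) =
        #(π'.filter (G'.Adj (ι' h hh))) := by
    rw [← hι' h hh]
    exact G.card_filter_adj_map_subtype_s4 G' hG' π' (ι' h hh)
  constructor
  · rintro ⟨π, hfree, rfl, hresp⟩
    obtain ⟨π', rfl⟩ := exists_map_subtype_eq fun v hv => (hfree v hv h0).symm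
    refine ⟨π', fun v hv h _ => hfree v (mem_map_of_mem _ hv) h, (card_map _).symm,
      fun h hh => hcount π' h hh ▸ hresp h⟩
  · rintro ⟨π', hfree, rfl, hresp⟩
    refine ⟨π'.map (Function.Embedding.subtype _), ?_, card_map _, fun h => ?_⟩
    · rintro _ hv h rfl
      obtain ⟨v, hv, hvh⟩ := mem_map.mp hv
      by_cases hh : h = h0
      · exact v.2 (hvh.trans (congrArg ι hh))
      · exact hfree v hv h hh hvh.symm
    · by_cases hh : h = h0
      · subst hh
        exact (card_filter_le _ _).trans ((card_map _).trans_le hub0)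
      · exact hcount π' h hh ▸ hresp h hh

/-- An inhabitant `h0` with `ub h0 ≥ R` can be safely
removed: the instance admits an inhabitants-respecting housing of size `R`
iff the instance obtained by deleting the vertex `ι h0` from the topology
and removing `h0` from the inhabitant set does.  The reduced instance lives
on the induced subgraph `G'` on the vertices other than `ι h0`, with the
assignment `ι'` agreeing with `ι` on `I \ {h0}`. -/
theorem remove_generous_inhabitant
    {V I : Type*} [Fintype V] [DecidableEq V] [Fintype I] [DecidableEq I]
    (G : SimpleGraph V) [DecidableRel G.Adj]
    (ι : I → V) (hinj : Function.Injective ι)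
    (ub : I → ℕ) (R : ℕ)
    (hsize : Fintype.card I + R ≤ Fintype.card V)
    (h0 : I) (hub0 : R ≤ ub h0)
    (G' : SimpleGraph {v : V // v ≠ ι h0}) [DecidableRel G'.Adj]
    (hG' : ∀ u v : {v : V // v ≠ ι h0}, G'.Adj u v ↔ G.Adj u.1 v.1)
    (ι' : ∀ h : I, h ≠ h0 → {v : V // v ≠ ι h0})
    (hι' : ∀ (h : I) (hh : h ≠ h0), (ι' h hh).1 = ι h) :
    (∃ π : Finset V,
        (∀ v ∈ π, ∀ h : I, ι h ≠ v) ∧ π.card = R ∧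
        ∀ h : I, (π.filter (fun v => G.Adj (ι h) v)).card ≤ ub h) ↔
    (∃ π' : Finset {v : V // v ≠ ι h0},
        (∀ v ∈ π', ∀ h : I, h ≠ h0 → ι h ≠ v.1) ∧ π'.card = R ∧
        ∀ (h : I) (hh : h ≠ h0),
          (π'.filter (fun v => G'.Adj (ι' h hh) v)).card ≤ ub h) :=
  remove_generous_inhabitant_general G ι ub R h0 hub0 G' hG' ι' hι'
end

section
/- Let H be a finite simple undirected graph and k ∈ ℕ. Construct an instance of anonymous refugee housing with upper-bounds as follows: the topology G' is the subdivision of H, i.e., G' has vertex set V(H) together with one new vertex w_e for every edge e = {u,v} ∈ E(H), where w_e is adjacent exactly to u and to v; every subdivision vertex w_e is occupied by an inhabitant h_e with ub(h_e) = 1; all original vertices of H are empty; and the number of refugees is R = k. Then H has an independent set of size at least k if and only if this instance admits an inhabitants-respecting housing of size k. Moreover, a set π ⊆ V(H) of size k is an inhabitants-respecting housing in the constructed instance if and only if π is an independent set in H. -/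
/-!
The subdivision vertex `w_e` is adjacent exactly to the endpoints of `e`, so a set `S` of
original vertices respects the bound `1` at every `w_e` iff no edge of `H` has both endpoints
in `S`, i.e. iff `S` is independent. Since independence passes to subsets, an independent set
of size at least `k` can be shrunk to one of size exactly `k`.
-/

open Finset

namespace Finset

lemma image_inl_toLeft_eq {α β : Type*} [DecidableEq α] [DecidableEq β] {u : Finset (α ⊕ β)}
    (hu : ∀ x ∈ u, ∃ a, x = Sum.inl a) : u.toLeft.image Sum.inl = u := by
  ext x
  rcases x with a | b
  · simp
  · simpa using fun hb => absurd (hu _ hb) (by simp)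

end Finset

namespace SimpleGraph

variable {W : Type*} {H : SimpleGraph W}

lemma isIndepSet_iff_forall_not_adj {s : Set W} :
    H.IsIndepSet s ↔ ∀ u ∈ s, ∀ v ∈ s, ¬ H.Adj u v :=
  ⟨fun h _ hu _ hv huv => h hu hv huv.ne huv, fun h u hu v hv _ => h u hu v hv⟩

lemma isIndepSet_iff_forall_card_filter_mem_le_one [DecidableEq W] (S : Finset W) :
    H.IsIndepSet S ↔ ∀ e ∈ H.edgeSet, #{v ∈ S | v ∈ e} ≤ 1 := by
  constructor
  · intro hS e he
    refine card_le_one.2 fun u hu v hv => ?_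
    rw [mem_filter] at hu hv
    by_contra hne
    rw [(Sym2.mem_and_mem_iff hne).1 ⟨hu.2, hv.2⟩, mem_edgeSet] at he
    exact hS hu.1 hv.1 hne he
  · intro h u hu v hv hne huv
    have : 1 < #{w ∈ S | w ∈ s(u, v)} :=
      one_lt_card.2 ⟨u, mem_filter.2 ⟨hu, Sym2.mem_mk_left u v⟩,
        v, mem_filter.2 ⟨hv, Sym2.mem_mk_right u v⟩, hne⟩
    exact (h _ huv).not_gt this

/-- `G` is the subdivision of `H`, the vertex `Sum.inr e` playing the role of `w_e`. -/
def IsSubdivision (H : SimpleGraph W) (G : SimpleGraph (W ⊕ H.edgeSet)) : Prop :=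
  ∀ x y, G.Adj x y ↔ ∃ (v : W) (e : H.edgeSet), v ∈ (e : Sym2 W) ∧
    ((x = Sum.inl v ∧ y = Sum.inr e) ∨ (x = Sum.inr e ∧ y = Sum.inl v))

namespace IsSubdivision

variable {G : SimpleGraph (W ⊕ H.edgeSet)}

lemma adj_inr_inl_iff (hG : IsSubdivision H G) (e : H.edgeSet) (v : W) :
    G.Adj (.inr e) (.inl v) ↔ v ∈ (e : Sym2 W) := by
  simp [hG _ _]

lemma filter_adj_inr_image_inl [DecidableEq W] [DecidableRel G.Adj] (hG : IsSubdivision H G)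
    (e : H.edgeSet) (S : Finset W) :
    (S.image Sum.inl).filter (G.Adj (.inr e)) = {v ∈ S | v ∈ (e : Sym2 W)}.image Sum.inl := by
  simp only [filter_image, adj_inr_inl_iff hG]

lemma forall_card_filter_adj_inr_le_one_iff [DecidableEq W] [DecidableRel G.Adj]
    (hG : IsSubdivision H G) (S : Finset W) :
    (∀ e : H.edgeSet, #((S.image Sum.inl).filter (G.Adj (.inr e))) ≤ 1) ↔ H.IsIndepSet S := by
  simp only [filter_adj_inr_image_inl hG, card_image_of_injective _ Sum.inl_injective,
    isIndepSet_iff_forall_card_filter_mem_le_one, Subtype.forall]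

end IsSubdivision

end SimpleGraph

open SimpleGraph in
theorem independent_set_reduction_correctness_general
    {W : Type*} [DecidableEq W]
    (H : SimpleGraph W) (k : ℕ)
    (G : SimpleGraph (W ⊕ ↥H.edgeSet)) [DecidableRel G.Adj]
    (hadj : ∀ x y, G.Adj x y ↔ ∃ (v : W) (e : H.edgeSet), v ∈ (e : Sym2 W) ∧
        ((x = Sum.inl v ∧ y = Sum.inr e) ∨ (x = Sum.inr e ∧ y = Sum.inl v))) :
    ((∃ S : Finset W, k ≤ S.card ∧ ∀ u ∈ S, ∀ v ∈ S, ¬ H.Adj u v) ↔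
      (∃ π : Finset (W ⊕ ↥H.edgeSet),
        (∀ x ∈ π, ∃ v : W, x = Sum.inl v) ∧ π.card = k ∧
        ∀ e : H.edgeSet, (π.filter (fun x => G.Adj (Sum.inr e) x)).card ≤ 1)) ∧
    (∀ S : Finset W, S.card = k →
      ((∀ e : H.edgeSet,
          ((S.image Sum.inl).filter (fun x => G.Adj (Sum.inr e) x)).card ≤ 1) ↔
        (∀ u ∈ S, ∀ v ∈ S, ¬ H.Adj u v))) := by
  have respects_iff (S : Finset W) :=
    (IsSubdivision.forall_card_filter_adj_inr_le_one_iff hadj S).trans isIndepSet_iff_forall_not_adj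
  refine ⟨⟨?_, ?_⟩, fun S _ => respects_iff S⟩
  · rintro ⟨S, hkS, hS⟩
    obtain ⟨T, hTS, rfl⟩ := exists_subset_card_eq hkS
    exact ⟨T.image Sum.inl, by simp, card_image_of_injective _ Sum.inl_injective,
      (respects_iff T).2 fun u hu v hv => hS u (hTS hu) v (hTS hv)⟩
  · rintro ⟨π, hπ, rfl, hub⟩
    rw [← image_inl_toLeft_eq hπ] at hub ⊢
    exact ⟨π.toLeft, (card_image_of_injective _ Sum.inl_injective).le, (respects_iff _).1 hub⟩

/-- Correctness of the reduction from Independent Set: in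
the subdivision `G` of a graph `H`, where every subdivision vertex `w_e`
(adjacent exactly to the two endpoints of `e`) is occupied by an inhabitant
with upper-bound `1` and all original vertices are empty, `H` has an
independent set of size at least `k` iff the constructed instance with `R = k`
admits an inhabitants-respecting housing.  Moreover, a `k`-sized set of
original vertices is an inhabitants-respecting housing iff it is an
independent set in `H`. -/
theorem independent_set_reduction_correctness
    {W : Type*} [Fintype W] [DecidableEq W]
    (H : SimpleGraph W) [DecidableRel H.Adj] (k : ℕ)
    (G : SimpleGraph (W ⊕ ↥H.edgeSet)) [DecidableRel G.Adj]
    (hadj : ∀ x y, G.Adj x y ↔ ∃ (v : W) (e : H.edgeSet), v ∈ (e : Sym2 W) ∧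
        ((x = Sum.inl v ∧ y = Sum.inr e) ∨ (x = Sum.inr e ∧ y = Sum.inl v))) :
    ((∃ S : Finset W, k ≤ S.card ∧ ∀ u ∈ S, ∀ v ∈ S, ¬ H.Adj u v) ↔
      (∃ π : Finset (W ⊕ ↥H.edgeSet),
        (∀ x ∈ π, ∃ v : W, x = Sum.inl v) ∧ π.card = k ∧
        ∀ e : H.edgeSet, (π.filter (fun x => G.Adj (Sum.inr e) x)).card ≤ 1)) ∧
    (∀ S : Finset W, S.card = k →
      ((∀ e : H.edgeSet,
          ((S.image Sum.inl).filter (fun x => G.Adj (Sum.inr e) x)).card ≤ 1) ↔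
        (∀ u ∈ S, ∀ v ∈ S, ¬ H.Adj u v))) :=
  independent_set_reduction_correctness_general H k G hadj
end

section
/- Let m ≥ 1 and R ≥ 1, and let the topology G be the complete bipartite graph with parts A and B, where |A| = m and |B| = R; let I be a set of m inhabitants with ι a bijection from I onto A, and let ub(h) = 0 for every h ∈ I. Then the unique housing of size R is π = B, it satisfies exc(π) = m·R, and for every t < m·R there is no t-relaxed inhabitants-respecting housing of size R. (Hence the bound t ≥ |I|·R guaranteeing existence of a t-relaxed inhabitants-respecting housing is tight.) -/
open Finset

/-- `exc(π)` for inhabitants living on the left side of a graph on `V ⊕ W`; truncated subtraction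
on `ℕ` is exactly `max 0 (· - ·)`. -/
def totalExcess {V W : Type*} [Fintype V] (G : SimpleGraph (V ⊕ W)) [DecidableRel G.Adj]
    (ub : V → ℕ) (π : Finset (V ⊕ W)) : ℕ :=
  ∑ i, ((π.filter (G.Adj (Sum.inl i))).card - ub i)

theorem Finset.eq_univ_image_inr_of_card_eq {V W : Type*} [Fintype W] [DecidableEq (V ⊕ W)]
    {s : Finset (V ⊕ W)} (hs : ∀ v ∈ s, ∀ a, v ≠ Sum.inl a) (hcard : s.card = Fintype.card W) :
    s = univ.image Sum.inr := by
  have hsub : s ⊆ univ.image Sum.inr := by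
    rintro (a | b) hv
    · exact absurd rfl (hs _ hv a)
    · exact mem_image_of_mem _ (mem_univ b)
  refine eq_of_subset_of_card_le hsub ?_
  rw [hcard, card_image_of_injective _ Sum.inr_injective, card_univ]

theorem totalExcess_completeBipartiteGraph_univ_image_inr {V W : Type*} [Fintype V] [Fintype W]
    [DecidableEq (V ⊕ W)] [DecidableRel (completeBipartiteGraph V W).Adj] (ub : V → ℕ) :
    totalExcess (completeBipartiteGraph V W) ub (univ.image Sum.inr) =
      ∑ i, (Fintype.card W - ub i) := by
  refine sum_congr rfl fun i _ => ?_
  rw [filter_true_of_mem, card_image_of_injective _ Sum.inr_injective, card_univ]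
  intro v hv
  obtain ⟨b, -, rfl⟩ := mem_image.1 hv
  simp

theorem relaxed_bound_tight_general
    (m R : ℕ)
    (G : SimpleGraph (Fin m ⊕ Fin R)) [DecidableRel G.Adj]
    (hadj : ∀ u v, G.Adj u v ↔
      ((∃ a, u = Sum.inl a) ∧ (∃ b, v = Sum.inr b)) ∨
      ((∃ b, u = Sum.inr b) ∧ (∃ a, v = Sum.inl a)))
    (ub : Fin m → ℕ) (hub : ∀ i, ub i = 0) :
    (∀ π : Finset (Fin m ⊕ Fin R),
        (∀ v ∈ π, ∀ i : Fin m, v ≠ Sum.inl i) → π.card = R →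
        π = Finset.univ.image (Sum.inr : Fin R → Fin m ⊕ Fin R)) ∧
    (∑ i : Fin m,
        (((Finset.univ.image (Sum.inr : Fin R → Fin m ⊕ Fin R)).filter
            (fun v => G.Adj (Sum.inl i) v)).card - ub i) = m * R) ∧
    (∀ t : ℕ, t < m * R →
      ¬ ∃ π : Finset (Fin m ⊕ Fin R),
          (∀ v ∈ π, ∀ i : Fin m, v ≠ Sum.inl i) ∧ π.card = R ∧
          ∑ i : Fin m,
              ((π.filter (fun v => G.Adj (Sum.inl i) v)).card - ub i) ≤ t) := by
  obtain rfl : G = completeBipartiteGraph (Fin m) (Fin R) := by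
    ext u v
    rw [hadj]
    cases u <;> cases v <;> simp
  have huniq : ∀ π : Finset (Fin m ⊕ Fin R), (∀ v ∈ π, ∀ i : Fin m, v ≠ Sum.inl i) →
      π.card = R → π = univ.image Sum.inr := fun π hπ hcard =>
    eq_univ_image_inr_of_card_eq hπ (hcard.trans (Fintype.card_fin R).symm)
  have hexc : totalExcess (completeBipartiteGraph (Fin m) (Fin R)) ub (univ.image Sum.inr) =
      m * R := by
    simp [totalExcess_completeBipartiteGraph_univ_image_inr, hub]
  refine ⟨huniq, hexc, ?_⟩
  rintro t ht ⟨π, hπ, hcard, hle⟩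
  rw [huniq π hπ hcard] at hle
  exact (hexc ▸ hle : m * R ≤ t).not_gt ht

/-- Tightness of the bound `t ≥ |I|·R`: in the complete
bipartite topology `K_{m,R}` with all `m ≥ 1` inhabitants on side `A` having
upper-bound `0` and `R ≥ 1` refugees, the unique housing of size `R` is
`π = B`, its total excess is `m·R`, and for every `t < m·R` there is no
`t`-relaxed inhabitants-respecting housing of size `R`. -/
theorem relaxed_bound_tight
    (m R : ℕ) (hm : 1 ≤ m) (hR : 1 ≤ R)
    (G : SimpleGraph (Fin m ⊕ Fin R)) [DecidableRel G.Adj]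
    (hadj : ∀ u v, G.Adj u v ↔
      ((∃ a, u = Sum.inl a) ∧ (∃ b, v = Sum.inr b)) ∨
      ((∃ b, u = Sum.inr b) ∧ (∃ a, v = Sum.inl a)))
    (ub : Fin m → ℕ) (hub : ∀ i, ub i = 0) :
    (∀ π : Finset (Fin m ⊕ Fin R),
        (∀ v ∈ π, ∀ i : Fin m, v ≠ Sum.inl i) → π.card = R →
        π = Finset.univ.image (Sum.inr : Fin R → Fin m ⊕ Fin R)) ∧
    (∑ i : Fin m,
        (((Finset.univ.image (Sum.inr : Fin R → Fin m ⊕ Fin R)).filter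
            (fun v => G.Adj (Sum.inl i) v)).card - ub i) = m * R) ∧
    (∀ t : ℕ, t < m * R →
      ¬ ∃ π : Finset (Fin m ⊕ Fin R),
          (∀ v ∈ π, ∀ i : Fin m, v ≠ Sum.inl i) ∧ π.card = R ∧
          ∑ i : Fin m,
              ((π.filter (fun v => G.Adj (Sum.inl i) v)).card - ub i) ≤ t) :=
  relaxed_bound_tight_general m R G hadj ub hub
end

section
/- Let H be a finite simple undirected graph and let k, t ∈ ℕ. Construct an instance of anonymous refugee housing with upper-bounds as follows: the topology G contains all vertices of H (all empty); for every edge e = {u,v} ∈ E(H) it contains t+1 new vertices w_e^1, …, w_e^{t+1}, each adjacent exactly to u and to v, each occupied by an inhabitant with upper-bound 1; additionally it contains t disjoint new edges {a_1,b_1}, …, {a_t,b_t} (not connected to anything else), where each a_i is occupied by an inhabitant with upper-bound 0 and each b_i is empty; and the number of refugees is R = k + t. Then H has an independent set of size at least k if and only if this instance admits a t-relaxed inhabitants-respecting housing of size k + t. -/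
/-- Correctness of the reduction showing NP-hardness of
`t`-relaxed housing.  The topology contains: all vertices of `H` (empty,
`Sum.inl (Sum.inl v)`); for every edge `e` of `H`, `t+1` subdivision copies
`w_e^j = Sum.inl (Sum.inr (e, j))`, each adjacent exactly to the endpoints of
`e` and occupied by an inhabitant with upper-bound `1`; and `t` disjoint
pendant edges `{a_i, b_i}` with `a_i = Sum.inr (Sum.inl i)` occupied by an
inhabitant with upper-bound `0` and `b_i = Sum.inr (Sum.inr i)` empty.
With `R = k + t`, `H` has an independent set of size at least `k` iff the
instance admits a `t`-relaxed inhabitants-respecting housing of size `k + t`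
(the total excess `exc(π)` is written with `ℕ`-truncated subtraction). -/
theorem relaxed_independent_set_reduction_correctness
    {W : Type*} [Fintype W] [DecidableEq W]
    (H : SimpleGraph W) [DecidableRel H.Adj] (k t : ℕ)
    (G : SimpleGraph ((W ⊕ ↥H.edgeSet × Fin (t + 1)) ⊕ (Fin t ⊕ Fin t)))
    [DecidableRel G.Adj]
    (hadj : ∀ x y, G.Adj x y ↔
      (∃ (v : W) (e : H.edgeSet) (j : Fin (t + 1)), v ∈ (e : Sym2 W) ∧
        ((x = Sum.inl (Sum.inl v) ∧ y = Sum.inl (Sum.inr (e, j))) ∨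
         (x = Sum.inl (Sum.inr (e, j)) ∧ y = Sum.inl (Sum.inl v)))) ∨
      (∃ i : Fin t,
        (x = Sum.inr (Sum.inl i) ∧ y = Sum.inr (Sum.inr i)) ∨
        (x = Sum.inr (Sum.inr i) ∧ y = Sum.inr (Sum.inl i)))) :
    (∃ S : Finset W, k ≤ S.card ∧ ∀ u ∈ S, ∀ v ∈ S, ¬ H.Adj u v) ↔
    (∃ π : Finset ((W ⊕ ↥H.edgeSet × Fin (t + 1)) ⊕ (Fin t ⊕ Fin t)),
      (∀ x ∈ π, (∃ v : W, x = Sum.inl (Sum.inl v)) ∨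
                (∃ i : Fin t, x = Sum.inr (Sum.inr i))) ∧
      π.card = k + t ∧
      (∑ p : ↥H.edgeSet × Fin (t + 1),
          ((π.filter (fun x => G.Adj (Sum.inl (Sum.inr p)) x)).card - 1)) +
        (∑ i : Fin t,
          ((π.filter (fun x => G.Adj (Sum.inr (Sum.inl i)) x)).card - 0)) ≤ t) := by
  classical
  have adj_w : ∀ (p : ↥H.edgeSet × Fin (t + 1)) x,
      G.Adj (Sum.inl (Sum.inr p)) x ↔
        ∃ v : W, v ∈ (p.1 : Sym2 W) ∧ x = Sum.inl (Sum.inl v) := by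
    intro p x
    rw [hadj]
    constructor
    · rintro (⟨v, e, j, hv, h | h⟩ | ⟨i, h | h⟩)
      · exact absurd h.1 (by simp)
      · obtain rfl : p = (e, j) := by simpa using h.1
        exact ⟨v, hv, h.2⟩
      · exact absurd h.1 (by simp)
      · exact absurd h.1 (by simp)
    · rintro ⟨v, hv, rfl⟩
      exact Or.inl ⟨v, p.1, p.2, hv, Or.inr ⟨rfl, rfl⟩⟩
  have adj_a : ∀ (i : Fin t) x,
      G.Adj (Sum.inr (Sum.inl i)) x ↔ x = Sum.inr (Sum.inr i) := by
    intro i x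
    rw [hadj]
    constructor
    · rintro (⟨v, e, j, hv, h | h⟩ | ⟨i', h | h⟩)
      · exact absurd h.1 (by simp)
      · exact absurd h.1 (by simp)
      · obtain rfl : i = i' := by simpa using h.1
        exact h.2
      · exact absurd h.1 (by simp)
    · rintro rfl
      exact Or.inr ⟨i, Or.inl ⟨rfl, rfl⟩⟩
  constructor
  · rintro ⟨S, hScard, hSind⟩
    obtain ⟨S', hS'sub, hS'card⟩ := Finset.exists_subset_card_eq hScard
    set π : Finset ((W ⊕ ↥H.edgeSet × Fin (t + 1)) ⊕ (Fin t ⊕ Fin t)) :=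
      S'.image (fun v => Sum.inl (Sum.inl v)) ∪
        Finset.univ.image (fun i : Fin t => Sum.inr (Sum.inr i)) with hπ
    have hmem : ∀ x, x ∈ π ↔
        (∃ v ∈ S', x = Sum.inl (Sum.inl v)) ∨ (∃ i : Fin t, x = Sum.inr (Sum.inr i)) := by
      intro x
      simp [hπ, eq_comm]
    refine ⟨π, ?_, ?_, ?_⟩
    · intro x hx
      rcases (hmem x).1 hx with ⟨v, _, rfl⟩ | ⟨i, rfl⟩
      · exact Or.inl ⟨v, rfl⟩
      · exact Or.inr ⟨i, rfl⟩
    · rw [hπ, Finset.card_union_of_disjoint, Finset.card_image_of_injective,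
        Finset.card_image_of_injective, hS'card, Finset.card_univ, Fintype.card_fin]
      · intro a b h; injection h with h; injection h
      · intro a b h; injection h with h; injection h
      · simp [Finset.disjoint_left]
    · have h1 : ∀ p : ↥H.edgeSet × Fin (t + 1),
          (π.filter (fun x => G.Adj (Sum.inl (Sum.inr p)) x)).card - 1 = 0 := by
        intro p
        have hle : (π.filter (fun x => G.Adj (Sum.inl (Sum.inr p)) x)).card ≤ 1 := by
          rw [Finset.card_le_one]
          rintro a ha b hb
          rw [Finset.mem_filter] at ha hb
          obtain ⟨u, hu, rfl⟩ := (adj_w p a).1 ha.2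
          obtain ⟨v, hv, rfl⟩ := (adj_w p b).1 hb.2
          obtain ⟨u', hu', hequ⟩ | ⟨i, hi⟩ := (hmem _).1 ha.1
          · obtain rfl : u = u' := by simpa using hequ
            obtain ⟨v', hv', heqv⟩ | ⟨i, hi⟩ := (hmem _).1 hb.1
            · obtain rfl : v = v' := by simpa using heqv
              by_contra hne
              have hne' : u ≠ v := fun h => hne (by rw [h])
              obtain ⟨⟨e, he⟩, j⟩ := p
              induction e with
              | h a b =>
                simp only [Sym2.mem_iff] at hu hv
                have hadj' : H.Adj u v := by
                  rw [SimpleGraph.mem_edgeSet] at he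
                  rcases hu with rfl | rfl <;> rcases hv with rfl | rfl
                  · exact absurd rfl hne'
                  · exact he
                  · exact he.symm
                  · exact absurd rfl hne'
                exact hSind _ (hS'sub hu') _ (hS'sub hv') hadj'
            · simp at hi
          · simp at hi
        omega
      have h2 : ∀ i : Fin t,
          (π.filter (fun x => G.Adj (Sum.inr (Sum.inl i)) x)).card = 1 := by
        intro i
        have : π.filter (fun x => G.Adj (Sum.inr (Sum.inl i)) x) = {Sum.inr (Sum.inr i)} := by
          ext x
          simp only [Finset.mem_filter, Finset.mem_singleton, adj_a]
          constructor
          · exact fun h => h.2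
          · rintro rfl
            exact ⟨(hmem _).2 (Or.inr ⟨i, rfl⟩), rfl⟩
        rw [this, Finset.card_singleton]
      simp [h1, h2]
  · rintro ⟨π, hform, hcard, hexc⟩
    set S : Finset W := Finset.univ.filter (fun v => Sum.inl (Sum.inl v) ∈ π) with hS
    set B : Finset (Fin t) := Finset.univ.filter (fun i => Sum.inr (Sum.inr i) ∈ π) with hB
    have hπeq : π = S.image (fun v => Sum.inl (Sum.inl v)) ∪
        B.image (fun i => Sum.inr (Sum.inr i)) := by
      ext x
      simp only [Finset.mem_union, Finset.mem_image, hS, hB, Finset.mem_filter,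
        Finset.mem_univ, true_and]
      constructor
      · intro hx
        rcases hform x hx with ⟨v, rfl⟩ | ⟨i, rfl⟩
        · exact Or.inl ⟨v, hx, rfl⟩
        · exact Or.inr ⟨i, hx, rfl⟩
      · rintro (⟨v, hv, rfl⟩ | ⟨i, hi, rfl⟩) <;> assumption
    have hcards : S.card + B.card = k + t := by
      rw [hπeq] at hcard
      rw [Finset.card_union_of_disjoint, Finset.card_image_of_injective,
        Finset.card_image_of_injective] at hcard
      · exact hcard
      · intro a b h; injection h with h; injection h
      · intro a b h; injection h with h; injection h
      · simp [Finset.disjoint_left]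
    have hBle : B.card ≤ t := by
      simpa using Finset.card_le_card (Finset.subset_univ B)
    refine ⟨S, by omega, ?_⟩
    intro u hu v hv hadj'
    have hne : u ≠ v := hadj'.ne
    have he : s(u, v) ∈ H.edgeSet := hadj'
    set e : ↥H.edgeSet := ⟨s(u, v), he⟩ with heq
    have hterm : ∀ j : Fin (t + 1),
        1 ≤ (π.filter (fun x => G.Adj (Sum.inl (Sum.inr (e, j))) x)).card - 1 := by
      intro j
      have hsub : ({Sum.inl (Sum.inl u), Sum.inl (Sum.inl v)} :
          Finset ((W ⊕ ↥H.edgeSet × Fin (t + 1)) ⊕ (Fin t ⊕ Fin t))) ⊆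
          π.filter (fun x => G.Adj (Sum.inl (Sum.inr (e, j))) x) := by
        intro x hx
        simp only [Finset.mem_insert, Finset.mem_singleton] at hx
        rw [Finset.mem_filter]
        rcases hx with rfl | rfl
        · refine ⟨by simpa [hS] using hu, (adj_w (e, j) _).2 ⟨u, ?_, rfl⟩⟩
          simp [heq]
        · refine ⟨by simpa [hS] using hv, (adj_w (e, j) _).2 ⟨v, ?_, rfl⟩⟩
          simp [heq]
      have h2 : 2 ≤ (π.filter (fun x => G.Adj (Sum.inl (Sum.inr (e, j))) x)).card := by
        calc 2 = ({Sum.inl (Sum.inl u), Sum.inl (Sum.inl v)} :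
            Finset ((W ⊕ ↥H.edgeSet × Fin (t + 1)) ⊕ (Fin t ⊕ Fin t))).card := by
              rw [Finset.card_insert_of_notMem (by simp [hne]), Finset.card_singleton]
          _ ≤ _ := Finset.card_le_card hsub
      omega
    have hbig : t + 1 ≤ ∑ p : ↥H.edgeSet × Fin (t + 1),
        ((π.filter (fun x => G.Adj (Sum.inl (Sum.inr p)) x)).card - 1) := by
      calc t + 1 = ∑ p ∈ ({e} ×ˢ Finset.univ : Finset (↥H.edgeSet × Fin (t + 1))), 1 := by
            simp
        _ ≤ ∑ p ∈ ({e} ×ˢ Finset.univ : Finset (↥H.edgeSet × Fin (t + 1))),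
              ((π.filter (fun x => G.Adj (Sum.inl (Sum.inr p)) x)).card - 1) := by
            refine Finset.sum_le_sum ?_
            rintro ⟨e', j⟩ hp
            simp only [Finset.mem_product, Finset.mem_singleton] at hp
            obtain ⟨rfl, -⟩ := hp
            exact hterm j
        _ ≤ _ := Finset.sum_le_sum_of_subset (Finset.subset_univ _)
    omega
end

section
/- Let (G, I, R, ι, ub) be an instance of anonymous refugee housing with upper-bounds and let X ⊆ V_U be any set of empty vertices. Then there exists an inhabitants-respecting housing of size R in (G, I, R, ι, ub) if and only if there exists a subset S ⊆ X with |S| ≤ R such that (i) for every inhabitant h ∈ I, |S ∩ N_G(ι(h))| ≤ ub(h), and (ii) the instance on the graph G \ X with inhabitant set I, assignment ι, R − |S| refugees, and modified upper-bounds ub'(h) = ub(h) − |S ∩ N_G(ι(h))| admits an inhabitants-respecting housing of size R − |S|. -/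
/-!
A housing `π` of `G` splits into `S = π ∩ X` and the rest `π \ X`, a housing of `G \ X`;
conversely, for `S ⊆ X` the union of `S` with a housing of `G \ X` consists of empty vertices
because `X` does.  The union being disjoint, the neighbours of `ι h` in `π` are those in `S` plus
those in `π \ X`, which is why the smaller instance has the bounds `ub h - |S ∩ N(ι h)|`.
-/

open Finset

namespace Finset

variable {V : Type*} {X : Finset V}

theorem disjoint_map_subtype_notMem {S : Finset V} (hS : S ⊆ X) (π' : Finset {v // v ∉ X}) :
    Disjoint S (π'.map (Function.Embedding.subtype _)) := by
  rw [disjoint_right]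
  rintro _ hv hvS
  obtain ⟨⟨v, hvX⟩, -, rfl⟩ := mem_map.mp hv
  exact hvX (hS hvS)

variable [DecidableEq V]

theorem exists_eq_union_map_subtype_notMem (π X : Finset V) :
    ∃ S ⊆ X, ∃ π' : Finset {v // v ∉ X},
      π = S ∪ π'.map (Function.Embedding.subtype _) := by
  refine ⟨π ∩ X, inter_subset_right, π.subtype (· ∉ X), ?_⟩
  rw [subtype_map, ← filter_mem_eq_inter, filter_union_filter_not_eq]

theorem card_union_map_subtype_notMem {S : Finset V} (hS : S ⊆ X)
    (π' : Finset {v // v ∉ X}) :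
    #(S ∪ π'.map (Function.Embedding.subtype _)) = #S + #π' := by
  rw [card_union_of_disjoint (disjoint_map_subtype_notMem hS π'), card_map]

theorem card_filter_union_map_subtype_notMem {S : Finset V} (hS : S ⊆ X)
    (π' : Finset {v // v ∉ X}) (p : V → Prop) [DecidablePred p] :
    #((S ∪ π'.map (Function.Embedding.subtype _)).filter p) =
      #(S.filter p) + #(π'.filter (fun v : {v // v ∉ X} => p v)) := by
  rw [filter_union, card_union_of_disjoint
    (disjoint_filter_filter (disjoint_map_subtype_notMem hS π')), filter_map, card_map]
  rfl

end Finset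

theorem branching_on_empty_vertices_general
    {V I : Type*}
    (G : SimpleGraph V) [DecidableRel G.Adj]
    (ι : I → V)
    (ub : I → ℕ) (R : ℕ)
    (X : Finset V) (hX : ∀ v ∈ X, ∀ h : I, ι h ≠ v)
    (G' : SimpleGraph {v : V // v ∉ X}) [DecidableRel G'.Adj]
    (hG' : ∀ u v : {v : V // v ∉ X}, G'.Adj u v ↔ G.Adj u.1 v.1)
    (ι' : I → {v : V // v ∉ X}) (hι' : ∀ h : I, (ι' h).1 = ι h) :
    (∃ π : Finset V,
        (∀ v ∈ π, ∀ h : I, ι h ≠ v) ∧ π.card = R ∧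
        ∀ h : I, (π.filter (fun v => G.Adj (ι h) v)).card ≤ ub h) ↔
    (∃ S : Finset V, S ⊆ X ∧ S.card ≤ R ∧
        (∀ h : I, (S.filter (fun v => G.Adj (ι h) v)).card ≤ ub h) ∧
        ∃ π' : Finset {v : V // v ∉ X},
          (∀ v ∈ π', ∀ h : I, ι h ≠ v.1) ∧ π'.card = R - S.card ∧
          ∀ h : I, (π'.filter (fun v => G'.Adj (ι' h) v)).card ≤
              ub h - (S.filter (fun v => G.Adj (ι h) v)).card) := by
  classical
  have hnbrs (S : Finset V) (hS : S ⊆ X) (π' : Finset {v // v ∉ X}) (h : I) :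
      #((S ∪ π'.map (Function.Embedding.subtype _)).filter (fun v => G.Adj (ι h) v)) =
        #(S.filter (fun v => G.Adj (ι h) v)) + #(π'.filter (fun v => G'.Adj (ι' h) v)) := by
    simp only [card_filter_union_map_subtype_notMem hS, hG', hι']
  constructor
  · rintro ⟨π, hempty, rfl, hub⟩
    obtain ⟨S, hSX, π', rfl⟩ := exists_eq_union_map_subtype_notMem π X
    have hcard := card_union_map_subtype_notMem hSX π'
    simp only [forall_mem_union, forall_mem_map] at hempty
    refine ⟨S, hSX, by omega, fun h => ?_, π', hempty.2, by omega, fun h => ?_⟩ <;>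
    · have := hub h
      have := hnbrs S hSX π' h
      omega
  · rintro ⟨S, hSX, hSR, hSub, π', hempty', hcard', hub'⟩
    have hcard := card_union_map_subtype_notMem hSX π'
    refine ⟨S ∪ π'.map (Function.Embedding.subtype _), ?_, by omega, fun h => ?_⟩
    · simp only [forall_mem_union, forall_mem_map]
      exact ⟨fun v hv => hX v (hSX hv), hempty'⟩
    · have := hub' h
      have := hSub h
      have := hnbrs S hSX π' h
      omega

/-- Branching correctness for the feedback-edge-set
algorithm.  Let `X ⊆ V_U` be any set of empty vertices and let `G'` be the
induced subgraph of `G` on `V \ X` (the occupied vertices survive, via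
`ι'`).  Then the instance admits an inhabitants-respecting housing of size
`R` iff there is `S ⊆ X` with `|S| ≤ R` such that (i) `|S ∩ N(ι h)| ≤ ub h`
for every inhabitant `h`, and (ii) the instance on `G \ X` with `R − |S|`
refugees and upper-bounds `ub h − |S ∩ N(ι h)|` admits an
inhabitants-respecting housing of size `R − |S|`. -/
theorem branching_on_empty_vertices
    {V I : Type*} [Fintype V] [DecidableEq V] [Fintype I] [DecidableEq I]
    (G : SimpleGraph V) [DecidableRel G.Adj]
    (ι : I → V) (hinj : Function.Injective ι)
    (ub : I → ℕ) (R : ℕ)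
    (hsize : Fintype.card I + R ≤ Fintype.card V)
    (X : Finset V) (hX : ∀ v ∈ X, ∀ h : I, ι h ≠ v)
    (G' : SimpleGraph {v : V // v ∉ X}) [DecidableRel G'.Adj]
    (hG' : ∀ u v : {v : V // v ∉ X}, G'.Adj u v ↔ G.Adj u.1 v.1)
    (ι' : I → {v : V // v ∉ X}) (hι' : ∀ h : I, (ι' h).1 = ι h) :
    (∃ π : Finset V,
        (∀ v ∈ π, ∀ h : I, ι h ≠ v) ∧ π.card = R ∧
        ∀ h : I, (π.filter (fun v => G.Adj (ι h) v)).card ≤ ub h) ↔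
    (∃ S : Finset V, S ⊆ X ∧ S.card ≤ R ∧
        (∀ h : I, (S.filter (fun v => G.Adj (ι h) v)).card ≤ ub h) ∧
        ∃ π' : Finset {v : V // v ∉ X},
          (∀ v ∈ π', ∀ h : I, ι h ≠ v.1) ∧ π'.card = R - S.card ∧
          ∀ h : I, (π'.filter (fun v => G'.Adj (ι' h) v)).card ≤
              ub h - (S.filter (fun v => G.Adj (ι h) v)).card) :=
  branching_on_empty_vertices_general G ι ub R X hX G' hG' ι' hι'
end

section
/- Let H be a finite simple undirected graph with n = |V(H)| divisible by 3. Construct an instance of anonymous refugee housing with upper-bounds as follows. Let G' be the subdivision of H in which every subdivision vertex w_e (adjacent exactly to the two endpoints of the edge e of H) is occupied by an edge-guard inhabitant h_e with ub(h_e) = 1. Take three disjoint copies G_1, G_2, G_3 of G', writing v^i for the copy in G_i of an original vertex v ∈ V(H). For each i ∈ {1,2,3} add a vertex g_i adjacent to v^i for every v ∈ V(H), occupied by a size-guard inhabitant with upper-bound n/3. For each v ∈ V(H) add a vertex g_v adjacent exactly to v^1, v^2, v^3, occupied by a vertex-guard inhabitant with upper-bound 1. All copies v^i of original vertices are empty,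 and the number of refugees is R = n. Then H admits a proper 3-colouring in which every colour class has size exactly n/3 if and only if this instance admits an inhabitants-respecting housing of size n. -/
/-!
A housing of size `n` can only use the empty copies `v^i`. The vertex-guard of `v` admits at most
one of `v^1, v^2, v^3`, so, having `n` refugees, it picks exactly one copy `v^{c v}` of every
vertex: housings are colourings `c`. The edge-guard on `w_e^i` forbids both ends of `e` to receive
colour `i`, i.e. `c` is proper, and the size-guard `g_i` bounds the class of `i` by `n/3`; since
the three classes partition the `n` vertices, all of them have size exactly `n/3`.
-/

open Finset

section Colourings

variable {κ W : Type*} [Fintype W]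

def colourPairs (c : W → κ) : Finset (κ × W) :=
  univ.map ⟨fun v => (c v, v), fun _ _ h => congrArg Prod.snd h⟩

lemma mem_colourPairs {c : W → κ} {p : κ × W} : p ∈ colourPairs c ↔ c p.2 = p.1 := by
  obtain ⟨i, v⟩ := p
  simp only [colourPairs, mem_map, mem_univ, true_and]
  constructor
  · rintro ⟨w, hw⟩
    cases hw
    rfl
  · rintro rfl
    exact ⟨v, rfl⟩

lemma card_colourPairs (c : W → κ) : #(colourPairs c) = Fintype.card W :=
  card_map _

lemma card_filter_colourPairs [DecidableEq W] (c : W → κ) (P : κ × W → Prop)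
    [DecidablePred P] :
    #((colourPairs c).filter P) = #(univ.filter fun v => P (c v, v)) := by
  rw [colourPairs, filter_map, card_map]
  rfl

lemma exists_eq_colourPairs [DecidableEq W] {S : Finset (κ × W)}
    (hfibre : ∀ v, #(S.filter (·.2 = v)) ≤ 1) (hcard : #S = Fintype.card W) :
    ∃ c, S = colourPairs c := by
  have hinj : Set.InjOn Prod.snd (S : Set (κ × W)) := fun p hp q hq hpq =>
    card_le_one.1 (hfibre p.2) p (mem_filter.2 ⟨hp, rfl⟩) q (mem_filter.2 ⟨hq, hpq.symm⟩)
  have hsurj : S.image Prod.snd = univ :=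
    eq_univ_of_card _ (by rw [card_image_of_injOn hinj, hcard])
  have hcover : ∀ v, ∃ i, (i, v) ∈ S := fun v => by
    obtain ⟨p, hp, rfl⟩ := mem_image.1 (hsurj ▸ mem_univ v)
    exact ⟨p.1, hp⟩
  choose c hc using hcover
  refine ⟨c, (eq_of_subset_of_card_le (fun p hp => ?_) ?_).symm⟩
  · obtain ⟨i, v⟩ := p
    obtain rfl : c v = i := mem_colourPairs.1 hp
    exact hc v
  · rw [hcard, card_colourPairs]

lemma card_fibre_eq_of_le [Fintype κ] [DecidableEq κ] {c : W → κ} {m : ℕ}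
    (hW : Fintype.card W = Fintype.card κ * m) (hle : ∀ j, #(univ.filter fun v => c v = j) ≤ m)
    (j : κ) : #(univ.filter fun v => c v = j) = m := by
  have hsum : ∑ j, #(univ.filter fun v => c v = j) = ∑ _j : κ, m := by
    rw [← card_eq_sum_card_fiberwise (fun v _ => mem_univ (c v)), card_univ, hW, sum_const,
      card_univ, smul_eq_mul]
  exact (sum_eq_sum_iff_of_le fun j _ => hle j).1 hsum j (mem_univ j)

lemma forall_adj_ne_iff_card_filter_mem_edge_le_one [DecidableEq κ] [DecidableEq W]
    (H : SimpleGraph W) (c : W → κ) :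
    (∀ u v, H.Adj u v → c u ≠ c v) ↔
      ∀ i (e : H.edgeSet), #(univ.filter fun v => c v = i ∧ v ∈ (e : Sym2 W)) ≤ 1 := by
  constructor
  · rintro hproper i ⟨e, he⟩
    refine card_le_one.2 fun u hu w hw => by_contra fun hne => ?_
    simp only [mem_filter, mem_univ, true_and] at hu hw
    have huw : e = s(u, w) := (Sym2.mem_and_mem_iff hne).1 ⟨hu.2, hw.2⟩
    exact hproper u w (H.mem_edgeSet.1 (huw ▸ he)) (hu.1.trans hw.1.symm)
  · intro hedge u v huv hcol
    exact H.ne_of_adj huv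
      (card_le_one.1 (hedge (c v) ⟨s(u, v), huv⟩) u (by simp [hcol]) v (by simp))

theorem exists_equitable_colouring_iff_exists_pairs [Fintype κ] [DecidableEq κ] [DecidableEq W]
    (H : SimpleGraph W) {m : ℕ} (hW : Fintype.card W = Fintype.card κ * m) :
    (∃ c : W → κ, (∀ u v, H.Adj u v → c u ≠ c v) ∧
      ∀ j, #(univ.filter fun v => c v = j) = m) ↔
    ∃ S : Finset (κ × W), #S = Fintype.card W ∧
      (∀ i (e : H.edgeSet), #(S.filter fun p => p.1 = i ∧ p.2 ∈ (e : Sym2 W)) ≤ 1) ∧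
      (∀ i, #(S.filter fun p => p.1 = i) ≤ m) ∧
      ∀ v, #(S.filter fun p => p.2 = v) ≤ 1 := by
  constructor
  · rintro ⟨c, hproper, hsize⟩
    refine ⟨colourPairs c, card_colourPairs c, ?_, ?_, ?_⟩ <;>
      simp only [card_filter_colourPairs]
    · exact (forall_adj_ne_iff_card_filter_mem_edge_le_one H c).1 hproper
    · exact fun i => (hsize i).le
    · intro v
      rw [filter_eq', if_pos (mem_univ v), card_singleton]
  · rintro ⟨S, hcard, hedge, hsize, hfibre⟩
    obtain ⟨c, rfl⟩ := exists_eq_colourPairs hfibre hcard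
    simp only [card_filter_colourPairs] at hedge hsize
    exact ⟨c, (forall_adj_ne_iff_card_filter_mem_edge_le_one H c).2 hedge,
      card_fibre_eq_of_le hW hsize⟩

end Colourings

section Reduction

open Sum

variable {W : Type*}

/-- `inl (i, inl v)` is the copy `v^i`, `inl (i, inr e)` the subdivision vertex `w_e^i`,
`inr (inl i)` the size-guard `g_i` and `inr (inr v)` the vertex-guard `g_v`. -/
def IsReductionTopology (H : SimpleGraph W)
    (G : SimpleGraph ((Fin 3 × (W ⊕ H.edgeSet)) ⊕ (Fin 3 ⊕ W))) : Prop :=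
  ∀ x y, G.Adj x y ↔
    (∃ (i : Fin 3) (v : W) (e : H.edgeSet), v ∈ (e : Sym2 W) ∧
      ((x = inl (i, inl v) ∧ y = inl (i, inr e)) ∨
        (x = inl (i, inr e) ∧ y = inl (i, inl v)))) ∨
    (∃ (i : Fin 3) (v : W),
      ((x = inr (inl i) ∧ y = inl (i, inl v)) ∨ (x = inl (i, inl v) ∧ y = inr (inl i)))) ∨
    (∃ (i : Fin 3) (v : W),
      ((x = inr (inr v) ∧ y = inl (i, inl v)) ∨ (x = inl (i, inl v) ∧ y = inr (inr v))))

def copyVertex {E : Type*} : Fin 3 × W ↪ (Fin 3 × (W ⊕ E)) ⊕ (Fin 3 ⊕ W) :=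
  ⟨fun p => inl (p.1, inl p.2), fun p q h => by simpa [Prod.ext_iff] using h⟩

@[simp]
lemma copyVertex_apply {E : Type*} (p : Fin 3 × W) :
    (copyVertex p : (Fin 3 × (W ⊕ E)) ⊕ (Fin 3 ⊕ W)) = inl (p.1, inl p.2) :=
  rfl

variable {H : SimpleGraph W} {G : SimpleGraph ((Fin 3 × (W ⊕ H.edgeSet)) ⊕ (Fin 3 ⊕ W))}

lemma IsReductionTopology.adj_subdivision_copyVertex_iff (hG : IsReductionTopology H G)
    (i : Fin 3) (e : H.edgeSet) (p : Fin 3 × W) :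
    G.Adj (inl (i, inr e)) (copyVertex p) ↔ p.1 = i ∧ p.2 ∈ (e : Sym2 W) := by
  rw [hG]
  simp [and_comm]

lemma IsReductionTopology.adj_sizeGuard_copyVertex_iff (hG : IsReductionTopology H G)
    (i : Fin 3) (p : Fin 3 × W) :
    G.Adj (inr (inl i)) (copyVertex p) ↔ p.1 = i := by
  rw [hG]
  simp

lemma IsReductionTopology.adj_vertexGuard_copyVertex_iff (hG : IsReductionTopology H G)
    (v : W) (p : Fin 3 × W) :
    G.Adj (inr (inr v)) (copyVertex p) ↔ p.2 = v := by
  rw [hG]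
  simp

lemma IsReductionTopology.exists_housing_iff [DecidableEq W] [DecidableRel G.Adj]
    (hG : IsReductionTopology H G) (n m : ℕ) :
    (∃ π : Finset ((Fin 3 × (W ⊕ H.edgeSet)) ⊕ (Fin 3 ⊕ W)),
      (∀ x ∈ π, ∃ (i : Fin 3) (v : W), x = inl (i, inl v)) ∧
      #π = n ∧
      (∀ (i : Fin 3) (e : H.edgeSet), #(π.filter fun x => G.Adj (inl (i, inr e)) x) ≤ 1) ∧
      (∀ i : Fin 3, #(π.filter fun x => G.Adj (inr (inl i)) x) ≤ m) ∧
      (∀ v : W, #(π.filter fun x => G.Adj (inr (inr v)) x) ≤ 1)) ↔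
    ∃ S : Finset (Fin 3 × W), #S = n ∧
      (∀ i (e : H.edgeSet), #(S.filter fun p => p.1 = i ∧ p.2 ∈ (e : Sym2 W)) ≤ 1) ∧
      (∀ i, #(S.filter fun p => p.1 = i) ≤ m) ∧
      ∀ v, #(S.filter fun p => p.2 = v) ≤ 1 := by
  constructor
  · rintro ⟨π, hπ, hcard, hedge, hsize, hvertex⟩
    have hπ_sub : π ⊆ (π.preimage copyVertex copyVertex.injective.injOn).map copyVertex :=
      fun x hx => by
        obtain ⟨i, v, rfl⟩ := hπ x hx
        exact mem_map_of_mem copyVertex (a := (i, v)) (mem_preimage.2 hx)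
    obtain ⟨S, -, rfl⟩ := subset_map_iff.1 hπ_sub
    simp only [filter_map, card_map, Function.comp_def, hG.adj_subdivision_copyVertex_iff,
      hG.adj_sizeGuard_copyVertex_iff, hG.adj_vertexGuard_copyVertex_iff]
      at hcard hedge hsize hvertex
    exact ⟨S, hcard, hedge, hsize, hvertex⟩
  · rintro ⟨S, hS⟩
    refine ⟨S.map copyVertex, fun x hx => ?_, ?_⟩
    · obtain ⟨p, -, rfl⟩ := mem_map.1 hx
      exact ⟨p.1, p.2, rfl⟩
    simpa only [filter_map, card_map, Function.comp_def, hG.adj_subdivision_copyVertex_iff,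
      hG.adj_sizeGuard_copyVertex_iff, hG.adj_vertexGuard_copyVertex_iff] using hS

end Reduction

theorem equitable_three_colouring_reduction_correctness_general
    {W : Type*} [Fintype W] [DecidableEq W]
    (H : SimpleGraph W)
    (hdvd : 3 ∣ Fintype.card W)
    (G : SimpleGraph ((Fin 3 × (W ⊕ ↥H.edgeSet)) ⊕ (Fin 3 ⊕ W)))
    [DecidableRel G.Adj]
    (hadj : ∀ x y, G.Adj x y ↔
      (∃ (i : Fin 3) (v : W) (e : H.edgeSet), v ∈ (e : Sym2 W) ∧
        ((x = Sum.inl (i, Sum.inl v) ∧ y = Sum.inl (i, Sum.inr e)) ∨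
         (x = Sum.inl (i, Sum.inr e) ∧ y = Sum.inl (i, Sum.inl v)))) ∨
      (∃ (i : Fin 3) (v : W),
        ((x = Sum.inr (Sum.inl i) ∧ y = Sum.inl (i, Sum.inl v)) ∨
         (x = Sum.inl (i, Sum.inl v) ∧ y = Sum.inr (Sum.inl i)))) ∨
      (∃ (i : Fin 3) (v : W),
        ((x = Sum.inr (Sum.inr v) ∧ y = Sum.inl (i, Sum.inl v)) ∨
         (x = Sum.inl (i, Sum.inl v) ∧ y = Sum.inr (Sum.inr v))))) :
    (∃ c : W → Fin 3, (∀ u v : W, H.Adj u v → c u ≠ c v) ∧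
        ∀ j : Fin 3,
          (Finset.univ.filter (fun v => c v = j)).card = Fintype.card W / 3) ↔
    (∃ π : Finset ((Fin 3 × (W ⊕ ↥H.edgeSet)) ⊕ (Fin 3 ⊕ W)),
      (∀ x ∈ π, ∃ (i : Fin 3) (v : W), x = Sum.inl (i, Sum.inl v)) ∧
      π.card = Fintype.card W ∧
      (∀ (i : Fin 3) (e : H.edgeSet),
        (π.filter (fun x => G.Adj (Sum.inl (i, Sum.inr e)) x)).card ≤ 1) ∧
      (∀ i : Fin 3,
        (π.filter (fun x => G.Adj (Sum.inr (Sum.inl i)) x)).card ≤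
          Fintype.card W / 3) ∧
      (∀ v : W,
        (π.filter (fun x => G.Adj (Sum.inr (Sum.inr v)) x)).card ≤ 1)) := by
  have hW : Fintype.card W = Fintype.card (Fin 3) * (Fintype.card W / 3) := by
    rw [Fintype.card_fin, Nat.mul_div_cancel' hdvd]
  rw [exists_equitable_colouring_iff_exists_pairs H hW,
    IsReductionTopology.exists_housing_iff hadj]

/-- Correctness of the reduction from Equitable
3-Colouring.  Vertices of the topology: `Sum.inl (i, Sum.inl v)` is the copy
`v^i` of an original vertex `v` of `H` in the copy `G_i` (empty);
`Sum.inl (i, Sum.inr e)` is the subdivision vertex `w_e^i`, occupied by an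
edge-guard with upper-bound `1`; `Sum.inr (Sum.inl i)` is the size-guard
vertex `g_i`, adjacent to all `v^i` and occupied by an inhabitant with
upper-bound `n/3`; and `Sum.inr (Sum.inr v)` is the vertex-guard vertex
`g_v`, adjacent exactly to `v^1, v^2, v^3` and occupied by an inhabitant
with upper-bound `1`.  With `R = n = |V(H)|` (divisible by 3), `H` has a
proper 3-colouring with all colour classes of size exactly `n/3` iff the
instance admits an inhabitants-respecting housing of size `n`. -/
theorem equitable_three_colouring_reduction_correctness
    {W : Type*} [Fintype W] [DecidableEq W]
    (H : SimpleGraph W) [DecidableRel H.Adj]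
    (hdvd : 3 ∣ Fintype.card W)
    (G : SimpleGraph ((Fin 3 × (W ⊕ ↥H.edgeSet)) ⊕ (Fin 3 ⊕ W)))
    [DecidableRel G.Adj]
    (hadj : ∀ x y, G.Adj x y ↔
      (∃ (i : Fin 3) (v : W) (e : H.edgeSet), v ∈ (e : Sym2 W) ∧
        ((x = Sum.inl (i, Sum.inl v) ∧ y = Sum.inl (i, Sum.inr e)) ∨
         (x = Sum.inl (i, Sum.inr e) ∧ y = Sum.inl (i, Sum.inl v)))) ∨
      (∃ (i : Fin 3) (v : W),
        ((x = Sum.inr (Sum.inl i) ∧ y = Sum.inl (i, Sum.inl v)) ∨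
         (x = Sum.inl (i, Sum.inl v) ∧ y = Sum.inr (Sum.inl i)))) ∨
      (∃ (i : Fin 3) (v : W),
        ((x = Sum.inr (Sum.inr v) ∧ y = Sum.inl (i, Sum.inl v)) ∨
         (x = Sum.inl (i, Sum.inl v) ∧ y = Sum.inr (Sum.inr v))))) :
    (∃ c : W → Fin 3, (∀ u v : W, H.Adj u v → c u ≠ c v) ∧
        ∀ j : Fin 3,
          (Finset.univ.filter (fun v => c v = j)).card = Fintype.card W / 3) ↔
    (∃ π : Finset ((Fin 3 × (W ⊕ ↥H.edgeSet)) ⊕ (Fin 3 ⊕ W)),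
      (∀ x ∈ π, ∃ (i : Fin 3) (v : W), x = Sum.inl (i, Sum.inl v)) ∧
      π.card = Fintype.card W ∧
      (∀ (i : Fin 3) (e : H.edgeSet),
        (π.filter (fun x => G.Adj (Sum.inl (i, Sum.inr e)) x)).card ≤ 1) ∧
      (∀ i : Fin 3,
        (π.filter (fun x => G.Adj (Sum.inr (Sum.inl i)) x)).card ≤
          Fintype.card W / 3) ∧
      (∀ v : W,
        (π.filter (fun x => G.Adj (Sum.inr (Sum.inr v)) x)).card ≤ 1)) :=
  equitable_three_colouring_reduction_correctness_general H hdvd G hadj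
end

section
/- In the instance constructed from a graph H with n = |V(H)| divisible by 3 as follows — G' is the subdivision of H with every subdivision vertex occupied by an edge-guard inhabitant with upper-bound 1; G_1, G_2, G_3 are three disjoint copies of G' with v^i denoting the copy of v ∈ V(H) in G_i; for each i ∈ {1,2,3} a vertex g_i adjacent to all v^i (v ∈ V(H)) is occupied by a size-guard inhabitant with upper-bound n/3; for each v ∈ V(H) a vertex g_v adjacent exactly to v^1, v^2, v^3 is occupied by a vertex-guard inhabitant with upper-bound 1; all copies of original vertices are empty; R = n — the following holds: for every inhabitants-respecting housing π of size n and every vertex v_i ∈ V(H), exactly one of the three copies v_i^1, v_i^2, v_i^3 belongs to π, i.e., |π ∩ {v_i^1, v_i^2, v_i^3}| = 1. -/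
/-!
Every vertex-guard `g_v` sees exactly the three copies of `v`, so a housing of copies meets each
triple `{v^1, v^2, v^3}` at most once. The triples partition the copies, hence the `n` refugees
are spread over `n` triples each receiving at most one, and so every triple receives exactly one.
-/

open Finset

theorem Finset.card_eq_sum_card_filter_of_unique {ι α : Type*} [Fintype ι] [DecidableEq α]
    (s : Finset α) (P : ι → α → Prop) [∀ i, DecidablePred (P i)]
    (hcover : ∀ x ∈ s, ∃ i, P i x) (hunique : ∀ x i j, P i x → P j x → i = j) :
    #s = ∑ i, #(s.filter (P i)) := by
  have hpart : s = univ.biUnion fun i => s.filter (P i) := by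
    ext x
    simp only [mem_biUnion, mem_univ, mem_filter, true_and]
    exact ⟨fun hx => (hcover x hx).imp fun _ h => ⟨hx, h⟩, fun ⟨_, hx, _⟩ => hx⟩
  conv_lhs => rw [hpart]
  refine card_biUnion fun i _ j _ hij => disjoint_filter.2 fun x _ hi hj => ?_
  exact hij (hunique x i j hi hj)

theorem Fintype.eq_one_of_sum_eq_card_of_le_one {ι : Type*} [Fintype ι] (a : ι → ℕ)
    (hsum : ∑ i, a i = Fintype.card ι) (hle : ∀ i, a i ≤ 1) (i : ι) : a i = 1 := by
  have hsum' : ∑ i, a i = ∑ _i : ι, 1 := by simpa using hsum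
  exact (sum_eq_sum_iff_of_le fun i _ => hle i).1 hsum' i (mem_univ i)

def equitableReductionAdj {W : Type*} (H : SimpleGraph W)
    (x y : (Fin 3 × (W ⊕ ↥H.edgeSet)) ⊕ (Fin 3 ⊕ W)) : Prop :=
  (∃ (i : Fin 3) (v : W) (e : H.edgeSet), v ∈ (e : Sym2 W) ∧
    ((x = Sum.inl (i, Sum.inl v) ∧ y = Sum.inl (i, Sum.inr e)) ∨
     (x = Sum.inl (i, Sum.inr e) ∧ y = Sum.inl (i, Sum.inl v)))) ∨
  (∃ (i : Fin 3) (v : W),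
    ((x = Sum.inr (Sum.inl i) ∧ y = Sum.inl (i, Sum.inl v)) ∨
     (x = Sum.inl (i, Sum.inl v) ∧ y = Sum.inr (Sum.inl i)))) ∨
  (∃ (i : Fin 3) (v : W),
    ((x = Sum.inr (Sum.inr v) ∧ y = Sum.inl (i, Sum.inl v)) ∨
     (x = Sum.inl (i, Sum.inl v) ∧ y = Sum.inr (Sum.inr v))))

theorem equitableReductionAdj_vertexGuard_iff {W : Type*} (H : SimpleGraph W) (w : W)
    (x : (Fin 3 × (W ⊕ ↥H.edgeSet)) ⊕ (Fin 3 ⊕ W)) :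
    equitableReductionAdj H (Sum.inr (Sum.inr w)) x ↔ ∃ i : Fin 3, x = Sum.inl (i, Sum.inl w) := by
  simp [equitableReductionAdj]

theorem equitable_reduction_exactly_one_copy_general
    {W : Type*} [Fintype W] [DecidableEq W]
    (H : SimpleGraph W)
    (G : SimpleGraph ((Fin 3 × (W ⊕ ↥H.edgeSet)) ⊕ (Fin 3 ⊕ W)))
    [DecidableRel G.Adj]
    (hadj : ∀ x y, G.Adj x y ↔
      (∃ (i : Fin 3) (v : W) (e : H.edgeSet), v ∈ (e : Sym2 W) ∧
        ((x = Sum.inl (i, Sum.inl v) ∧ y = Sum.inl (i, Sum.inr e)) ∨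
         (x = Sum.inl (i, Sum.inr e) ∧ y = Sum.inl (i, Sum.inl v)))) ∨
      (∃ (i : Fin 3) (v : W),
        ((x = Sum.inr (Sum.inl i) ∧ y = Sum.inl (i, Sum.inl v)) ∨
         (x = Sum.inl (i, Sum.inl v) ∧ y = Sum.inr (Sum.inl i)))) ∨
      (∃ (i : Fin 3) (v : W),
        ((x = Sum.inr (Sum.inr v) ∧ y = Sum.inl (i, Sum.inl v)) ∨
         (x = Sum.inl (i, Sum.inl v) ∧ y = Sum.inr (Sum.inr v))))) :
    ∀ π : Finset ((Fin 3 × (W ⊕ ↥H.edgeSet)) ⊕ (Fin 3 ⊕ W)),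
      (∀ x ∈ π, ∃ (i : Fin 3) (v : W), x = Sum.inl (i, Sum.inl v)) →
      π.card = Fintype.card W →
      (∀ (i : Fin 3) (e : H.edgeSet),
        (π.filter (fun x => G.Adj (Sum.inl (i, Sum.inr e)) x)).card ≤ 1) →
      (∀ i : Fin 3,
        (π.filter (fun x => G.Adj (Sum.inr (Sum.inl i)) x)).card ≤
          Fintype.card W / 3) →
      (∀ v : W,
        (π.filter (fun x => G.Adj (Sum.inr (Sum.inr v)) x)).card ≤ 1) →
      ∀ v : W,
        (π.filter (fun x => ∃ i : Fin 3, x = Sum.inl (i, Sum.inl v))).card = 1 := by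
  intro π hcopies hcard _ _ hvertexGuard
  have hguard_filter (w : W) : π.filter (fun x => G.Adj (Sum.inr (Sum.inr w)) x) =
      π.filter (fun x => ∃ i : Fin 3, x = Sum.inl (i, Sum.inl w)) :=
    filter_congr fun x _ => (hadj _ x).trans (equitableReductionAdj_vertexGuard_iff H w x)
  have hsum := card_eq_sum_card_filter_of_unique π
    (fun (w : W) x => ∃ i : Fin 3, x = Sum.inl (i, Sum.inl w))
    (fun x hx => (hcopies x hx).elim fun i ⟨w, hx⟩ => ⟨w, i, hx⟩)
    (by rintro x w w' ⟨i, rfl⟩ ⟨j, h⟩; simp only [Sum.inl.injEq, Prod.mk.injEq] at h; exact h.2)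
  exact Fintype.eq_one_of_sum_eq_card_of_le_one _ (hsum ▸ hcard)
    fun w => hguard_filter w ▸ hvertexGuard w

/-- In the instance constructed from `H` for the
Equitable-3-Colouring reduction (same encoding as in Statement 12:
`Sum.inl (i, Sum.inl v)` is the empty copy `v^i`, `Sum.inl (i, Sum.inr e)`
the edge-guard vertex `w_e^i` with upper-bound `1`, `Sum.inr (Sum.inl i)`
the size-guard vertex `g_i` with upper-bound `n/3`, and `Sum.inr (Sum.inr v)`
the vertex-guard vertex `g_v` with upper-bound `1`; `R = n = |V(H)|`,
divisible by 3), every inhabitants-respecting housing `π` of size `n`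
contains exactly one of the three copies `v^1, v^2, v^3` of each original
vertex `v`. -/
theorem equitable_reduction_exactly_one_copy
    {W : Type*} [Fintype W] [DecidableEq W]
    (H : SimpleGraph W) [DecidableRel H.Adj]
    (hdvd : 3 ∣ Fintype.card W)
    (G : SimpleGraph ((Fin 3 × (W ⊕ ↥H.edgeSet)) ⊕ (Fin 3 ⊕ W)))
    [DecidableRel G.Adj]
    (hadj : ∀ x y, G.Adj x y ↔
      (∃ (i : Fin 3) (v : W) (e : H.edgeSet), v ∈ (e : Sym2 W) ∧
        ((x = Sum.inl (i, Sum.inl v) ∧ y = Sum.inl (i, Sum.inr e)) ∨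
         (x = Sum.inl (i, Sum.inr e) ∧ y = Sum.inl (i, Sum.inl v)))) ∨
      (∃ (i : Fin 3) (v : W),
        ((x = Sum.inr (Sum.inl i) ∧ y = Sum.inl (i, Sum.inl v)) ∨
         (x = Sum.inl (i, Sum.inl v) ∧ y = Sum.inr (Sum.inl i)))) ∨
      (∃ (i : Fin 3) (v : W),
        ((x = Sum.inr (Sum.inr v) ∧ y = Sum.inl (i, Sum.inl v)) ∨
         (x = Sum.inl (i, Sum.inl v) ∧ y = Sum.inr (Sum.inr v))))) :
    ∀ π : Finset ((Fin 3 × (W ⊕ ↥H.edgeSet)) ⊕ (Fin 3 ⊕ W)),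
      (∀ x ∈ π, ∃ (i : Fin 3) (v : W), x = Sum.inl (i, Sum.inl v)) →
      π.card = Fintype.card W →
      (∀ (i : Fin 3) (e : H.edgeSet),
        (π.filter (fun x => G.Adj (Sum.inl (i, Sum.inr e)) x)).card ≤ 1) →
      (∀ i : Fin 3,
        (π.filter (fun x => G.Adj (Sum.inr (Sum.inl i)) x)).card ≤
          Fintype.card W / 3) →
      (∀ v : W,
        (π.filter (fun x => G.Adj (Sum.inr (Sum.inr v)) x)).card ≤ 1) →
      ∀ v : W,
        (π.filter (fun x => ∃ i : Fin 3, x = Sum.inl (i, Sum.inl v))).card = 1 :=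
  equitable_reduction_exactly_one_copy_general H G hadj
end
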